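/- Let f : L⁰(ℱ, ℝ) → L⁰(ℱ, ℝ) be L⁰-convex and local, and suppose f is bounded on some ball {x : |x| ≤ ε·1} around 0 (ε > 0 real), i.e., there exists M ∈ L⁰ with f(x) ≤ M for all such x. Then f is continuous at 0 with respect to the topology of convergence in probability. -/

import Mathlib

/-! For `0 < t ≤ 1` let `A = {|x| ≤ t ε}`. By locality `f x = f (I_A x)` on `A`, and `I_A x = t z`
with `z` in the `ε`-ball, so convexity along the segments from `0` to `z` and from `-z` to `t z`
gives `|f x - f 0| ≤ t (M - f 0)` on `A`. Off `A` the integrand of the distance is at most `1`,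
which is bounded by a multiple of the integrand of `d(x, 0)`. Hence
`d(f x, f 0) ≤ d(t (M - f 0), 0) + C_t d(x, 0)`; the first term tends to `0` with `t` by
dominated convergence. -/

open MeasureTheory Filter Topology Pointwise

variable {Ω : Type*} [MeasurableSpace Ω] {μ : Measure Ω}

/-- `L⁰(ℱ, ℝ)` as a commutative ring: `AEEqFun` with pointwise a.e. operations. -/
noncomputable instance AEEqFun.commRing : CommRing (Ω →ₘ[μ] ℝ) :=
  { AEEqFun.instAddCommGroup, AEEqFun.instCommMonoid with
    left_distrib := fun a b c => by
      apply AEEqFun.ext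
      filter_upwards [AEEqFun.coeFn_mul a (b + c), AEEqFun.coeFn_add b c,
        AEEqFun.coeFn_add (a * b) (a * c), AEEqFun.coeFn_mul a b, AEEqFun.coeFn_mul a c]
        with w h1 h2 h3 h4 h5
      simp [h1, h2, h3, h4, h5, mul_add]
    right_distrib := fun a b c => by
      apply AEEqFun.ext
      filter_upwards [AEEqFun.coeFn_mul (a + b) c, AEEqFun.coeFn_add a b,
        AEEqFun.coeFn_add (a * c) (b * c), AEEqFun.coeFn_mul a c, AEEqFun.coeFn_mul b c]
        with w h1 h2 h3 h4 h5
      simp [h1, h2, h3, h4, h5, add_mul]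
    zero_mul := fun a => by
      apply AEEqFun.ext
      filter_upwards [AEEqFun.coeFn_mul 0 a, AEEqFun.coeFn_zero (β := ℝ) (μ := μ)]
        with w h1 h2
      simp [h1, h2]
    mul_zero := fun a => by
      apply AEEqFun.ext
      filter_upwards [AEEqFun.coeFn_mul a 0, AEEqFun.coeFn_zero (β := ℝ) (μ := μ)]
        with w h1 h2
      simp [h1, h2] }

/-- The equivalence class `I_A` of the indicator function of a measurable set `A`. -/
noncomputable def indFun (A : Set Ω) (hA : MeasurableSet A) : Ω →ₘ[μ] ℝ :=
  AEEqFun.mk (A.indicator fun _ => (1 : ℝ))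
    ((measurable_one.indicator hA).aestronglyMeasurable)

/-- An `L⁰`-convex function on an `L⁰(ℱ,ℝ)`-module `E`. -/
def L0ConvexFun {E : Type*} [AddCommGroup E] [Module (Ω →ₘ[μ] ℝ) E]
    (f : E → Ω →ₘ[μ] ℝ) : Prop :=
  ∀ x y : E, ∀ ξ : Ω →ₘ[μ] ℝ, 0 ≤ ξ → ξ ≤ 1 →
    f (ξ • x + (1 - ξ) • y) ≤ ξ * f x + (1 - ξ) * f y

/-- An `L⁰`-convex subset of an `L⁰(ℱ,ℝ)`-module `E`. -/
def L0ConvexSet {E : Type*} [AddCommGroup E] [Module (Ω →ₘ[μ] ℝ) E]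
    (G : Set E) : Prop :=
  ∀ x ∈ G, ∀ y ∈ G, ∀ ξ : Ω →ₘ[μ] ℝ, 0 ≤ ξ → ξ ≤ 1 → ξ • x + (1 - ξ) • y ∈ G

/-- The subdifferential of `f` at `x`, a set of `L⁰`-linear maps `E →ₗ[L⁰] L⁰`. -/
def L0Subdiff {E : Type*} [AddCommGroup E] [Module (Ω →ₘ[μ] ℝ) E]
    (f : E → Ω →ₘ[μ] ℝ) (x : E) : Set (E →ₗ[Ω →ₘ[μ] ℝ] (Ω →ₘ[μ] ℝ)) :=
  {u | ∀ y : E, u (y - x) ≤ f y - f x}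

/-- The metric of convergence in probability on `L⁰(ℱ,ℝ)`. -/
noncomputable def probDist (f g : Ω →ₘ[μ] ℝ) : ℝ :=
  ∫ w, |f w - g w| / (1 + |f w - g w|) ∂μ

noncomputable def fracAbs (t : ℝ) : ℝ := |t| / (1 + |t|)

lemma fracAbs_nonneg (t : ℝ) : 0 ≤ fracAbs t := by
  unfold fracAbs; positivity

lemma fracAbs_le_one (t : ℝ) : fracAbs t ≤ 1 :=
  div_le_one_of_le₀ (by linarith [abs_nonneg t]) (by positivity)

lemma fracAbs_le_fracAbs {s t : ℝ} (h : |s| ≤ |t|) : fracAbs s ≤ fracAbs t := by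
  unfold fracAbs
  rw [div_le_div_iff₀ (by positivity) (by positivity)]
  nlinarith

lemma continuous_fracAbs : Continuous fracAbs :=
  continuous_abs.div (continuous_const.add continuous_abs) fun t => by positivity

/-- Where `|r| > c`, the left side is at most `1 = (1 + c) / c * fracAbs c`. -/
lemma fracAbs_le_add_mul {c : ℝ} (hc : 0 < c) {r s t : ℝ} (h : |r| ≤ c → |s| ≤ |t|) :
    fracAbs s ≤ fracAbs t + (1 + c) / c * fracAbs r := by
  by_cases hr : |r| ≤ c
  · have := fracAbs_nonneg r
    have := fracAbs_le_fracAbs (h hr)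
    have : 0 ≤ (1 + c) / c := by positivity
    nlinarith
  · have hcr : fracAbs c ≤ fracAbs r := fracAbs_le_fracAbs (by rw [abs_of_pos hc]; linarith)
    have hc1 : (1 + c) / c * fracAbs c = 1 := by
      unfold fracAbs; rw [abs_of_pos hc]; field_simp
    calc fracAbs s ≤ 1 := fracAbs_le_one s
      _ = (1 + c) / c * fracAbs c := hc1.symm
      _ ≤ fracAbs t + (1 + c) / c * fracAbs r := by
        have := fracAbs_nonneg t
        have := mul_le_mul_of_nonneg_left hcr (by positivity : 0 ≤ (1 + c) / c)
        linarith

lemma integrable_fracAbs [IsFiniteMeasure μ] {g : Ω → ℝ} (hg : AEStronglyMeasurable g μ) :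
    Integrable (fun w => fracAbs (g w)) μ :=
  (integrable_const 1).mono' (continuous_fracAbs.comp_aestronglyMeasurable hg)
    (ae_of_all _ fun w => by
      rw [Real.norm_eq_abs, abs_of_nonneg (fracAbs_nonneg _)]; exact fracAbs_le_one _)

lemma probDist_nonneg (x y : Ω →ₘ[μ] ℝ) : 0 ≤ probDist x y :=
  integral_nonneg fun _ => fracAbs_nonneg _

lemma probDist_zero_right (x : Ω →ₘ[μ] ℝ) : probDist x 0 = ∫ w, fracAbs (x w) ∂μ :=
  integral_congr_ae <| by
    filter_upwards [AEEqFun.coeFn_zero (β := ℝ) (μ := μ)] with w hw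
    simp only [hw, Pi.zero_apply, sub_zero]
    rfl

lemma probDist_le_add_mul [IsFiniteMeasure μ] {x y d e : Ω →ₘ[μ] ℝ} {c : ℝ} (hc : 0 < c)
    (h : ∀ᵐ w ∂μ, |e w| ≤ c → |x w - y w| ≤ |d w|) :
    probDist x y ≤ probDist d 0 + (1 + c) / c * probDist e 0 := by
  rw [probDist_zero_right, probDist_zero_right, ← integral_const_mul,
    ← integral_add (integrable_fracAbs d.aestronglyMeasurable)
      ((integrable_fracAbs e.aestronglyMeasurable).const_mul _)]
  exact integral_mono_ae (integrable_fracAbs (x.aestronglyMeasurable.sub y.aestronglyMeasurable))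
    ((integrable_fracAbs d.aestronglyMeasurable).add
      ((integrable_fracAbs e.aestronglyMeasurable).const_mul _))
    (h.mono fun w hw => fracAbs_le_add_mul hc hw)

lemma tendsto_probDist_smul_zero [IsFiniteMeasure μ] (g : Ω →ₘ[μ] ℝ) :
    Tendsto (fun t : ℝ => probDist (t • g) 0) (𝓝 0) (𝓝 0) := by
  have hsmul (t : ℝ) : probDist (t • g) 0 = ∫ w, fracAbs (t * g w) ∂μ := by
    rw [probDist_zero_right]
    refine integral_congr_ae ?_
    filter_upwards [AEEqFun.coeFn_smul t g] with w hw
    rw [hw, Pi.smul_apply, smul_eq_mul]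
  simp only [hsmul]
  have hcont (w : Ω) : Continuous fun t : ℝ => fracAbs (t * g w) :=
    continuous_fracAbs.comp (continuous_id.mul continuous_const)
  have := tendsto_integral_filter_of_dominated_convergence (μ := μ) (l := 𝓝 (0 : ℝ))
    (fun _ => 1)
    (Eventually.of_forall fun t =>
      continuous_fracAbs.comp_aestronglyMeasurable (g.aestronglyMeasurable.const_mul t))
    (Eventually.of_forall fun t => ae_of_all _ fun w => by
      rw [Real.norm_eq_abs, abs_of_nonneg (fracAbs_nonneg _)]; exact fracAbs_le_one _)
    (integrable_const 1) (ae_of_all _ fun w => (hcont w).tendsto 0)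
  simpa [fracAbs] using this

lemma tendsto_zero_of_le_add_mul {ι κ : Type*} {l : Filter ι} {l' : Filter κ} [l'.NeBot]
    {a b : ι → ℝ} {I K : κ → ℝ} (ha : ∀ i, 0 ≤ a i) (hb : Tendsto b l (𝓝 0))
    (hI : Tendsto I l' (𝓝 0)) (hab : ∀ᶠ s in l', ∀ i, a i ≤ I s + K s * b i) :
    Tendsto a l (𝓝 0) := by
  refine tendsto_order.2 ⟨fun δ hδ => Eventually.of_forall fun i => hδ.trans_le (ha i),
    fun δ hδ => ?_⟩
  obtain ⟨s, hs, hIs⟩ := (hab.and (hI.eventually (gt_mem_nhds (half_pos hδ)))).exists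
  have hKb : Tendsto (fun i => K s * b i) l (𝓝 0) := by simpa using hb.const_mul (K s)
  filter_upwards [hKb.eventually (gt_mem_nhds (half_pos hδ))] with i hi
  linarith [hs i]

def L0LocalFun (f : (Ω →ₘ[μ] ℝ) → Ω →ₘ[μ] ℝ) : Prop :=
  ∀ (B : Set Ω) (hB : MeasurableSet B) (x y : Ω →ₘ[μ] ℝ),
    indFun (μ := μ) B hB * x = indFun (μ := μ) B hB * y →
      indFun (μ := μ) B hB * f x = indFun (μ := μ) B hB * f y

lemma coeFn_indFun (A : Set Ω) (hA : MeasurableSet A) :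
    ⇑(indFun (μ := μ) A hA) =ᵐ[μ] A.indicator 1 :=
  AEEqFun.coeFn_mk _ _

lemma indFun_mul_self (A : Set Ω) (hA : MeasurableSet A) :
    indFun (μ := μ) A hA * indFun A hA = indFun A hA := by
  apply AEEqFun.ext
  filter_upwards [AEEqFun.coeFn_mul (indFun (μ := μ) A hA) (indFun A hA),
    coeFn_indFun (μ := μ) A hA] with w hmul hind
  by_cases hw : w ∈ A <;> simp [hmul, hind, hw]

lemma L0LocalFun.ae_apply_indFun_mul {f : (Ω →ₘ[μ] ℝ) → Ω →ₘ[μ] ℝ} (hf : L0LocalFun f)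
    (A : Set Ω) (hA : MeasurableSet A) (x : Ω →ₘ[μ] ℝ) :
    ∀ᵐ w ∂μ, w ∈ A → f (indFun A hA * x) w = f x w := by
  have h := hf A hA (indFun A hA * x) x (by rw [← mul_assoc, indFun_mul_self])
  filter_upwards [AEEqFun.coeFn_mul (indFun (μ := μ) A hA) (f (indFun A hA * x)),
    AEEqFun.coeFn_mul (indFun (μ := μ) A hA) (f x), coeFn_indFun (μ := μ) A hA]
    with w h₁ h₂ hind hw
  have := congrFun (congrArg (⇑) h) w
  simpa [h₁, h₂, hind, hw] using this

lemma AEEqFun.const_mul_eq_smul (t : ℝ) (x : Ω →ₘ[μ] ℝ) : AEEqFun.const Ω t * x = t • x := by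
  apply AEEqFun.ext
  filter_upwards [AEEqFun.coeFn_mul (AEEqFun.const Ω t) x, AEEqFun.coeFn_const (μ := μ) Ω t,
    AEEqFun.coeFn_smul t x] with w h₁ h₂ h₃
  simp [h₁, h₂, h₃]

lemma AEEqFun.const_le_const {s t : ℝ} (h : s ≤ t) :
    AEEqFun.const Ω s ≤ (AEEqFun.const Ω t : Ω →ₘ[μ] ℝ) := by
  rw [← AEEqFun.coeFn_le]
  filter_upwards [AEEqFun.coeFn_const (μ := μ) Ω s, AEEqFun.coeFn_const (μ := μ) Ω t]
    with w hs ht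
  simpa [hs, ht] using h

lemma L0ConvexFun.ae_apply_smul_add_le {f : (Ω →ₘ[μ] ℝ) → Ω →ₘ[μ] ℝ} (hf : L0ConvexFun f)
    {t : ℝ} (ht₀ : 0 ≤ t) (ht₁ : t ≤ 1) (x y : Ω →ₘ[μ] ℝ) :
    ∀ᵐ w ∂μ, f (t • x + (1 - t) • y) w ≤ t * f x w + (1 - t) * f y w := by
  have h := hf x y (AEEqFun.const Ω t) (AEEqFun.const_le_const ht₀) (AEEqFun.const_le_const ht₁)
  have hsub : 1 - AEEqFun.const Ω t = (AEEqFun.const Ω (1 - t) : Ω →ₘ[μ] ℝ) := rfl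
  simp only [smul_eq_mul, hsub, AEEqFun.const_mul_eq_smul] at h
  filter_upwards [AEEqFun.coeFn_le.2 h, AEEqFun.coeFn_add (t • f x) ((1 - t) • f y),
    AEEqFun.coeFn_smul t (f x), AEEqFun.coeFn_smul (1 - t) (f y)] with w h hadd h₁ h₂
  simpa [hadd, h₁, h₂] using h

section ConvexBound

variable {f : (Ω →ₘ[μ] ℝ) → Ω →ₘ[μ] ℝ} {M : Ω →ₘ[μ] ℝ}

/-- Upper bound from `t • z = t • z + (1 - t) • 0`, lower bound from
`0 = (1 + t)⁻¹ • (t • z) + (1 - (1 + t)⁻¹) • (-z)`. -/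
lemma L0ConvexFun.ae_abs_apply_smul_sub_le (hf : L0ConvexFun f) {z : Ω →ₘ[μ] ℝ}
    (hz : f z ≤ M) (hz' : f (-z) ≤ M) {t : ℝ} (ht₀ : 0 ≤ t) (ht₁ : t ≤ 1) :
    ∀ᵐ w ∂μ, |f (t • z) w - f 0 w| ≤ t * (M w - f 0 w) := by
  have hupper := hf.ae_apply_smul_add_le ht₀ ht₁ z 0
  rw [smul_zero, add_zero] at hupper
  have hs₀ : 0 ≤ (1 + t)⁻¹ := by positivity
  have hs₁ : (1 + t)⁻¹ ≤ 1 := inv_le_one_of_one_le₀ (by linarith)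
  have hlower := hf.ae_apply_smul_add_le hs₀ hs₁ (t • z) (-z)
  have hzero : (1 + t)⁻¹ • t • z + (1 - (1 + t)⁻¹) • -z = 0 := by
    rw [smul_smul, smul_neg, ← sub_eq_add_neg, ← sub_smul]
    convert zero_smul ℝ z
    field_simp
    ring
  rw [hzero] at hlower
  filter_upwards [hupper, hlower, AEEqFun.coeFn_le.2 hz, AEEqFun.coeFn_le.2 hz']
    with w hu hl hM hM'
  have hl' : (1 + t) * f 0 w ≤ f (t • z) w + t * f (-z) w := by
    have := mul_le_mul_of_nonneg_left hl (by positivity : (0 : ℝ) ≤ 1 + t)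
    field_simp at this
    linarith
  rw [abs_le]
  constructor <;> nlinarith

lemma L0ConvexFun.ae_abs_apply_sub_le (hf : L0ConvexFun f) (hloc : L0LocalFun f) {ε : ℝ}
    (hε : 0 ≤ ε) (hb : ∀ x : Ω →ₘ[μ] ℝ, (∀ᵐ w ∂μ, |x w| ≤ ε) → f x ≤ M) {t : ℝ}
    (ht₀ : 0 < t) (ht₁ : t ≤ 1) (x : Ω →ₘ[μ] ℝ) :
    ∀ᵐ w ∂μ, |x w| ≤ t * ε → |f x w - f 0 w| ≤ t * (M w - f 0 w) := by
  set A : Set Ω := {w | |x w| ≤ t * ε}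
  have hA : MeasurableSet A := measurableSet_le x.measurable.abs measurable_const
  set z : Ω →ₘ[μ] ℝ := t⁻¹ • (indFun A hA * x)
  have hz : ∀ᵐ w ∂μ, |z w| ≤ ε := by
    filter_upwards [AEEqFun.coeFn_smul t⁻¹ (indFun A hA * x),
      AEEqFun.coeFn_mul (indFun (μ := μ) A hA) x, coeFn_indFun (μ := μ) A hA] with w hs hm hind
    change |(t⁻¹ • (indFun A hA * x) : Ω →ₘ[μ] ℝ) w| ≤ ε
    by_cases hw : w ∈ A
    · simp only [hs, hm, hind, Pi.smul_apply, Pi.mul_apply, Set.indicator_of_mem hw,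
        Pi.one_apply, one_mul, smul_eq_mul, abs_mul, abs_inv, abs_of_pos ht₀]
      rw [inv_mul_le_iff₀ ht₀]
      exact hw
    · simp [hs, hm, hind, hw, hε]
  have hz' : ∀ᵐ w ∂μ, |(-z) w| ≤ ε := by
    filter_upwards [AEEqFun.coeFn_neg z, hz] with w hneg hw
    rwa [hneg, Pi.neg_apply, abs_neg]
  have hbound := hf.ae_abs_apply_smul_sub_le (hb z hz) (hb (-z) hz') ht₀.le ht₁
  rw [smul_inv_smul₀ ht₀.ne'] at hbound
  filter_upwards [hbound, hloc.ae_apply_indFun_mul A hA x] with w hw hloc hwA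
  rwa [← hloc hwA]

lemma L0ConvexFun.probDist_apply_le [IsFiniteMeasure μ] (hf : L0ConvexFun f) (hloc : L0LocalFun f)
    {ε : ℝ} (hε : 0 < ε) (hb : ∀ x : Ω →ₘ[μ] ℝ, (∀ᵐ w ∂μ, |x w| ≤ ε) → f x ≤ M) {t : ℝ}
    (ht₀ : 0 < t) (ht₁ : t ≤ 1) (x : Ω →ₘ[μ] ℝ) :
    probDist (f x) (f 0) ≤
      probDist (t • (M - f 0)) 0 + (1 + t * ε) / (t * ε) * probDist x 0 := by
  refine probDist_le_add_mul (by positivity) ?_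
  filter_upwards [hf.ae_abs_apply_sub_le hloc hε.le hb ht₀ ht₁ x,
    AEEqFun.coeFn_smul t (M - f 0), AEEqFun.coeFn_sub M (f 0)] with w hw hs hsub hx
  rw [hs, Pi.smul_apply, hsub, Pi.sub_apply, smul_eq_mul]
  exact (hw hx).trans (le_abs_self _)

end ConvexBound

/-- An `L⁰`-convex local function `f : L⁰ → L⁰` bounded above on a ball
`{x : |x| ≤ ε}` around `0` is continuous at `0` for convergence in probability. -/
theorem l0Convex_bounded_continuous_at_zero [IsProbabilityMeasure μ]
    (f : (Ω →ₘ[μ] ℝ) → (Ω →ₘ[μ] ℝ)) (hconv : L0ConvexFun f)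
    (hloc : ∀ (B : Set Ω) (hB : MeasurableSet B) (x y : Ω →ₘ[μ] ℝ),
      indFun (μ := μ) B hB * x = indFun (μ := μ) B hB * y → indFun (μ := μ) B hB * f x = indFun (μ := μ) B hB * f y)
    (ε : ℝ) (hε : 0 < ε) (M : Ω →ₘ[μ] ℝ)
    (hb : ∀ x : Ω →ₘ[μ] ℝ, (∀ᵐ w ∂μ, |x w| ≤ ε) → f x ≤ M) :
    ∀ u : ℕ → Ω →ₘ[μ] ℝ, Tendsto (fun n => probDist (u n) 0) atTop (𝓝 0) →
      Tendsto (fun n => probDist (f (u n)) (f 0)) atTop (𝓝 0) := by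
  intro u hu
  refine tendsto_zero_of_le_add_mul (l' := 𝓝[>] 0) (K := fun t => (1 + t * ε) / (t * ε))
    (fun n => probDist_nonneg _ _) hu
    ((tendsto_probDist_smul_zero (M - f 0)).mono_left nhdsWithin_le_nhds) ?_
  filter_upwards [Ioc_mem_nhdsGT one_pos] with t ⟨ht₀, ht₁⟩ n
  exact hconv.probDist_apply_le hloc hε hb ht₀ ht₁ (u n)
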